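/- Let m ∈ ℝ^n, let S be a positive definite symmetric n×n matrix, and define x = −η(mm^T + S)^{-1/2} m for some η > 0. Then the spectral norm of x, i.e., the Euclidean norm ‖x‖, satisfies ‖x‖ ≤ η. More precisely, the operator norm of the rank-one matrix xx^T is at most η². -/

import Mathlib

/-! With `A = m mᵀ + S` and `B = √A`: since `S ⪰ 0`, `(m ⬝ᵥ u)² ≤ u ⬝ᵥ A u` for every `u`, and
at `u = A⁻¹ m = B⁻¹ (B⁻¹ m)` both sides are powers of `t = ‖B⁻¹ m‖²`. So `t² ≤ t`, i.e. `t ≤ 1`,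
and `‖x‖ ≤ η`; the bound on `‖x xᵀ‖` is then Cauchy–Schwarz. -/

open Matrix
open scoped Classical

/-- The positive semidefinite square root of a matrix (zero if not PSD). -/
noncomputable def sqrtM {n : ℕ} (A : Matrix (Fin n) (Fin n) ℝ) : Matrix (Fin n) (Fin n) ℝ :=
  if h : A.PosSemidef then (h.1.eigenvectorUnitary : Matrix (Fin n) (Fin n) ℝ) *
    diagonal (Real.sqrt ∘ h.1.eigenvalues) * (star h.1.eigenvectorUnitary : Matrix (Fin n) (Fin n) ℝ)
    else 0

/-- Euclidean norm of a vector. -/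
noncomputable def euclNorm {n : ℕ} (v : Fin n → ℝ) : ℝ := Real.sqrt (v ⬝ᵥ v)

/-- The ℓ₂ operator (spectral) norm of a matrix. -/
noncomputable def opNorm {n : ℕ} (A : Matrix (Fin n) (Fin n) ℝ) : ℝ :=
  ⨆ u : {u : Fin n → ℝ // euclNorm u ≤ 1}, euclNorm (A *ᵥ u)

section sqrtM

variable {n : ℕ} {A : Matrix (Fin n) (Fin n) ℝ}

lemma Matrix.PosSemidef.sqrtM_eq (hA : A.PosSemidef) :
    sqrtM A = (hA.1.eigenvectorUnitary : Matrix (Fin n) (Fin n) ℝ) *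
      diagonal (Real.sqrt ∘ hA.1.eigenvalues) *
      (star hA.1.eigenvectorUnitary : Matrix (Fin n) (Fin n) ℝ) :=
  dif_pos hA

lemma Matrix.PosSemidef.sqrtM_posSemidef (hA : A.PosSemidef) : (sqrtM A).PosSemidef := by
  have hD : (diagonal (Real.sqrt ∘ hA.1.eigenvalues)).PosSemidef :=
    PosSemidef.diagonal fun _ => Real.sqrt_nonneg _
  simpa [hA.sqrtM_eq, star_eq_conjTranspose] using
    hD.mul_mul_conjTranspose_same (hA.1.eigenvectorUnitary : Matrix (Fin n) (Fin n) ℝ)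

lemma Matrix.PosSemidef.sqrtM_mul_self (hA : A.PosSemidef) : sqrtM A * sqrtM A = A := by
  have hU : (star hA.1.eigenvectorUnitary : Matrix (Fin n) (Fin n) ℝ) *
      (hA.1.eigenvectorUnitary : Matrix (Fin n) (Fin n) ℝ) = 1 :=
    mem_unitaryGroup_iff'.mp hA.1.eigenvectorUnitary.2
  have hD : diagonal (Real.sqrt ∘ hA.1.eigenvalues) * diagonal (Real.sqrt ∘ hA.1.eigenvalues) =
      diagonal hA.1.eigenvalues := by
    rw [diagonal_mul_diagonal]
    congr 1
    ext i
    exact Real.mul_self_sqrt (hA.eigenvalues_nonneg i)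
  conv_rhs => rw [hA.1.spectral_theorem, Unitary.conjStarAlgAut_apply]
  rw [show (RCLike.ofReal ∘ hA.1.eigenvalues : Fin n → ℝ) = hA.1.eigenvalues from rfl, ← hD,
    hA.sqrtM_eq]
  simp only [Matrix.mul_assoc]
  rw [← Matrix.mul_assoc (star _) (_ : Matrix (Fin n) (Fin n) ℝ), hU, Matrix.one_mul]

lemma Matrix.PosDef.isUnit_sqrtM (hA : A.PosDef) : IsUnit (sqrtM A) :=
  isUnit_of_mul_isUnit_left (hA.posSemidef.sqrtM_mul_self ▸ hA.isUnit)

end sqrtM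

section dotProduct

variable {ι : Type*} [Fintype ι]

lemma Matrix.IsSymm.mulVec_dotProduct {B : Matrix ι ι ℝ} (hB : B.IsSymm) (a b : ι → ℝ) :
    B *ᵥ a ⬝ᵥ b = a ⬝ᵥ B *ᵥ b := by
  rw [dotProduct_comm, dotProduct_mulVec, ← mulVec_transpose, hB.eq, dotProduct_comm]

lemma sq_dotProduct_le_dotProduct_mulVec {m : ι → ℝ} {S : Matrix ι ι ℝ} (hS : S.PosSemidef)
    (u : ι → ℝ) : (m ⬝ᵥ u) ^ 2 ≤ u ⬝ᵥ (vecMulVec m m + S) *ᵥ u := by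
  have hSu : 0 ≤ u ⬝ᵥ S *ᵥ u := by simpa using hS.dotProduct_mulVec_nonneg u
  rw [add_mulVec, dotProduct_add, vecMulVec_mulVec, op_smul_eq_smul, dotProduct_smul,
    smul_eq_mul, dotProduct_comm u m, sq]
  linarith

lemma inv_mulVec_dotProduct_self_le_one [DecidableEq ι] {B S : Matrix ι ι ℝ} {m : ι → ℝ}
    (hB : B.IsSymm) (hBunit : IsUnit B) (hS : S.PosSemidef) (hBB : B * B = vecMulVec m m + S) :
    B⁻¹ *ᵥ m ⬝ᵥ B⁻¹ *ᵥ m ≤ 1 := by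
  set y := B⁻¹ *ᵥ m
  have hBinv : B * B⁻¹ = 1 := mul_nonsing_inv B ((isUnit_iff_isUnit_det B).mp hBunit)
  have hBy : B *ᵥ y = m := by rw [mulVec_mulVec, hBinv, one_mulVec]
  have hBu : B *ᵥ (B⁻¹ *ᵥ y) = y := by rw [mulVec_mulVec, hBinv, one_mulVec]
  have key := sq_dotProduct_le_dotProduct_mulVec (m := m) hS (B⁻¹ *ᵥ y)
  rw [← hBB, ← mulVec_mulVec, ← hB.mulVec_dotProduct, hBu, ← hBy, hB.mulVec_dotProduct, hBu]
    at key
  nlinarith [dotProduct_self_star_nonneg y]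

end dotProduct

section euclNorm

variable {n : ℕ}

lemma euclNorm_nonneg (v : Fin n → ℝ) : 0 ≤ euclNorm v := Real.sqrt_nonneg _

lemma euclNorm_neg (v : Fin n → ℝ) : euclNorm (-v) = euclNorm v := by
  rw [euclNorm, neg_dotProduct, dotProduct_neg, neg_neg, euclNorm]

lemma euclNorm_smul (c : ℝ) (v : Fin n → ℝ) : euclNorm (c • v) = |c| * euclNorm v := by
  rw [euclNorm, smul_dotProduct, dotProduct_smul, smul_eq_mul, smul_eq_mul, ← mul_assoc,
    Real.sqrt_mul (mul_self_nonneg c), Real.sqrt_mul_self_eq_abs, euclNorm]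

lemma abs_dotProduct_le_euclNorm_mul_euclNorm (a b : Fin n → ℝ) :
    |a ⬝ᵥ b| ≤ euclNorm a * euclNorm b := by
  have ha : 0 ≤ a ⬝ᵥ a := by simpa using dotProduct_self_star_nonneg a
  rw [euclNorm, euclNorm, ← Real.sqrt_mul ha, ← Real.sqrt_sq_eq_abs]
  apply Real.sqrt_le_sqrt
  simpa [dotProduct, sq] using Finset.sum_mul_sq_le_sq_mul_sq Finset.univ a b

lemma opNorm_vecMulVec_self_le (x : Fin n → ℝ) : opNorm (vecMulVec x x) ≤ euclNorm x ^ 2 := by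
  have : Nonempty {u : Fin n → ℝ // euclNorm u ≤ 1} := ⟨⟨0, by simp [euclNorm]⟩⟩
  refine ciSup_le fun ⟨v, hv⟩ => ?_
  rw [vecMulVec_mulVec, op_smul_eq_smul, euclNorm_smul]
  have hx := euclNorm_nonneg x
  calc |x ⬝ᵥ v| * euclNorm x ≤ euclNorm x * euclNorm v * euclNorm x := by
        gcongr
        exact abs_dotProduct_le_euclNorm_mul_euclNorm x v
    _ ≤ euclNorm x * 1 * euclNorm x := by gcongr
    _ = euclNorm x ^ 2 := by ring

end euclNorm

theorem leon_feasibility {n : ℕ} (m : Fin n → ℝ) {S : Matrix (Fin n) (Fin n) ℝ}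
    (hS : S.PosDef) {η : ℝ} (hη : 0 < η) {x : Fin n → ℝ}
    (hx : x = -(η • ((sqrtM (vecMulVec m m + S))⁻¹ *ᵥ m))) :
    euclNorm x ≤ η ∧ opNorm (vecMulVec x x) ≤ η ^ 2 := by
  have hA : (vecMulVec m m + S).PosDef := by
    refine PosDef.posSemidef_add ?_ hS
    simpa using posSemidef_vecMulVec_self_star m
  have hy : euclNorm ((sqrtM (vecMulVec m m + S))⁻¹ *ᵥ m) ≤ 1 :=
    Real.sqrt_le_one.mpr <| inv_mulVec_dotProduct_self_le_one
      (isHermitian_iff_isSymm.mp hA.posSemidef.sqrtM_posSemidef.1)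
      hA.isUnit_sqrtM hS.posSemidef hA.posSemidef.sqrtM_mul_self
  have hx_le : euclNorm x ≤ η := by
    rw [hx, euclNorm_neg, euclNorm_smul, abs_of_pos hη]
    exact mul_le_of_le_one_right hη.le hy
  exact ⟨hx_le, (opNorm_vecMulVec_self_le x).trans (pow_le_pow_left₀ (euclNorm_nonneg x) hx_le 2)⟩
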